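/- arXiv:1910.00305 — 3 statements merged into one kernel-verified Lean document; each statement's English description precedes it below -/
import Mathlib

section
/- A graph G is vertex-stable for the chromatic number (every vertex deletion leaves χ unchanged) if and only if the join G + G is edge-stable for the chromatic number (every edge deletion leaves χ unchanged). -/
/-- The join of two graphs: their disjoint union together with all edges between the parts. -/
def SimpleGraph.joinGraph {α β : Type*} (G : SimpleGraph α) (H : SimpleGraph β) :
    SimpleGraph (α ⊕ β) where
  Adj x y := match x, y with
    | Sum.inl a, Sum.inl b => G.Adj a b
    | Sum.inr a, Sum.inr b => H.Adj a b
    | Sum.inl _, Sum.inr _ => True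
    | Sum.inr _, Sum.inl _ => True
  symm := ⟨fun x y => match x, y with
    | Sum.inl _, Sum.inl _ => fun h => G.adj_symm h
    | Sum.inr _, Sum.inr _ => fun h => H.adj_symm h
    | Sum.inl _, Sum.inr _ => fun _ => trivial
    | Sum.inr _, Sum.inl _ => fun _ => trivial⟩
  loopless := ⟨fun x => by cases x <;> simp⟩

namespace VJStableAux

open SimpleGraph Finset

variable {α β : Type*} {G : SimpleGraph α} {H : SimpleGraph β}

@[simp] lemma join_adj_ll {a b : α} :
    (G.joinGraph H).Adj (Sum.inl a) (Sum.inl b) ↔ G.Adj a b := Iff.rfl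

@[simp] lemma join_adj_rr {a b : β} :
    (G.joinGraph H).Adj (Sum.inr a) (Sum.inr b) ↔ H.Adj a b := Iff.rfl

@[simp] lemma join_adj_lr {a : α} {b : β} :
    (G.joinGraph H).Adj (Sum.inl a) (Sum.inr b) := trivial

@[simp] lemma join_adj_rl {a : β} {b : α} :
    (G.joinGraph H).Adj (Sum.inr a) (Sum.inl b) := trivial

/-- A graph admitting a proper coloring with colors inside a finset `s` is
`s.card`-colorable. -/
lemma colorable_of_mem {W γ : Type*} [DecidableEq γ] (G : SimpleGraph W)
    {f : W → γ} (hf : ∀ ⦃a b⦄, G.Adj a b → f a ≠ f b)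
    {s : Finset γ} (hs : ∀ w, f w ∈ s) : G.Colorable s.card := by
  have C : G.Coloring {x // x ∈ s} :=
    SimpleGraph.Coloring.mk (fun w => ⟨f w, hs w⟩) (fun hab => by
      simpa [Subtype.ext_iff] using hf hab)
  simpa using C.colorable

lemma le_card_of_coloring {W γ : Type*} [DecidableEq γ] {G : SimpleGraph W} {k : ℕ}
    (hk : G.chromaticNumber = (k : ℕ∞)) {f : W → γ}
    (hf : ∀ ⦃a b⦄, G.Adj a b → f a ≠ f b)
    {s : Finset γ} (hs : ∀ w, f w ∈ s) : k ≤ s.card := by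
  have h := (colorable_of_mem G hf hs).chromaticNumber_le
  rw [hk, Nat.cast_le] at h
  exact h

lemma le_card_image {W γ : Type*} [Fintype W] [DecidableEq γ] {G : SimpleGraph W} {k : ℕ}
    (hk : G.chromaticNumber = (k : ℕ∞)) {f : W → γ}
    (hf : ∀ ⦃a b⦄, G.Adj a b → f a ≠ f b) :
    k ≤ (Finset.univ.image f).card :=
  le_card_of_coloring hk hf (fun w => Finset.mem_image_of_mem f (Finset.mem_univ w))

/-- If `G` minus the edge `ab` is `n`-colorable, then so is `G` minus the vertex `a`. -/
lemma induce_colorable_of_deleteEdge {W : Type*} (G : SimpleGraph W) {a b : W} {n : ℕ}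
    (h : (G.deleteEdges {s(a, b)}).Colorable n) : (G.induce {a}ᶜ).Colorable n := by
  obtain ⟨g⟩ := h
  by_cases hab : g a = g b
  · refine ⟨SimpleGraph.Coloring.mk (fun x => g x.1) fun {x y} hxy => ?_⟩
    have hadj : G.Adj (x : W) (y : W) := hxy
    have hx : (x : W) ≠ a := fun h' => x.2 (Set.mem_singleton_iff.mpr h')
    have hy : (y : W) ≠ a := fun h' => y.2 (Set.mem_singleton_iff.mpr h')
    refine g.valid ?_
    rw [SimpleGraph.deleteEdges_adj, Set.mem_singleton_iff]
    refine ⟨hadj, fun hm => ?_⟩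
    rcases Sym2.eq_iff.mp hm with ⟨h1, _⟩ | ⟨_, h2⟩
    · exact hx h1
    · exact hy h2
  · have hG : G.Colorable n := by
      refine ⟨SimpleGraph.Coloring.mk g fun {x y} hxy => ?_⟩
      by_cases hm : s(x, y) = s(a, b)
      · rcases Sym2.eq_iff.mp hm with ⟨h1, h2⟩ | ⟨h1, h2⟩
        · subst h1; subst h2; exact hab
        · subst h1; subst h2; exact fun h' => hab h'.symm
      · exact g.valid (by rw [SimpleGraph.deleteEdges_adj, Set.mem_singleton_iff]
                          exact ⟨hxy, hm⟩)
    exact SimpleGraph.Colorable.of_hom (SimpleGraph.Embedding.induce _).toHom hG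

variable {V : Type*} [Fintype V]

/-- The join of two copies of a `k`-colorable graph is `k+k`-colorable. -/
lemma join_colorable {k : ℕ} {G : SimpleGraph V} (hk : G.Colorable k) :
    (G.joinGraph G).Colorable (k + k) := by
  obtain ⟨c⟩ := hk
  have C : (G.joinGraph G).Coloring (Fin k ⊕ Fin k) :=
    SimpleGraph.Coloring.mk (Sum.map c c) (by
      rintro (x | x) (y | y) hadj <;> simp_all
      exacts [c.valid hadj, c.valid hadj])
  simpa using C.colorable

/-- Any coloring of the join of two copies of `G` uses at least `2 χ(G)` colors. -/
lemma join_lower {k : ℕ} {G : SimpleGraph V} (hk : G.chromaticNumber = (k : ℕ∞)) {n : ℕ}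
    (h : (G.joinGraph G).Colorable n) : k + k ≤ n := by
  classical
  obtain ⟨f⟩ := h
  have hS : k ≤ (Finset.univ.image (fun x : V => f (Sum.inl x))).card :=
    le_card_image hk (fun x y hxy => f.valid (join_adj_ll.mpr hxy))
  have hT : k ≤ (Finset.univ.image (fun x : V => f (Sum.inr x))).card :=
    le_card_image hk (fun x y hxy => f.valid (join_adj_rr.mpr hxy))
  have hd : Disjoint (Finset.univ.image (fun x : V => f (Sum.inl x)))
      (Finset.univ.image (fun x : V => f (Sum.inr x))) := by
    rw [Finset.disjoint_left]
    rintro c hc hc'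
    simp only [Finset.mem_image, Finset.mem_univ, true_and] at hc hc'
    obtain ⟨x, hx⟩ := hc
    obtain ⟨y, hy⟩ := hc'
    exact f.valid (join_adj_lr (a := x) (b := y)) (hx.trans hy.symm)
  calc k + k ≤ _ + _ := add_le_add hS hT
    _ = _ := (Finset.card_union_of_disjoint hd).symm
    _ ≤ Fintype.card (Fin n) := Finset.card_le_univ _
    _ = n := Fintype.card_fin n

lemma two_sets_le {m k : ℕ} {S T : Finset (Fin m)} (hS : k ≤ S.card) (hT : k ≤ T.card)
    (hd : Disjoint S T) : k + k ≤ m := by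
  calc k + k ≤ S.card + T.card := add_le_add hS hT
    _ = (S ∪ T).card := (Finset.card_union_of_disjoint hd).symm
    _ ≤ Fintype.card (Fin m) := Finset.card_le_univ _
    _ = m := Fintype.card_fin m

/-- Forward direction counting: if `G` is vertex-stable with `χ(G) = k`, then the join minus
any edge needs at least `2k` colors. -/
lemma forward_count {k : ℕ} {G : SimpleGraph V} (hk : G.chromaticNumber = (k : ℕ∞))
    (hv : ∀ v : V, (G.induce {v}ᶜ).chromaticNumber = (k : ℕ∞))
    {p q : V ⊕ V} (hpq : (G.joinGraph G).Adj p q) {m : ℕ}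
    (h : ((G.joinGraph G).deleteEdges {s(p, q)}).Colorable m) : k + k ≤ m := by
  classical
  obtain ⟨f⟩ := h
  rcases p with a | a <;> rcases q with b | b
  · -- edge inside the first copy
    have hab : G.Adj a b := hpq
    -- colors on the first copy: proper coloring of `G - ab`
    have hf1 : ∀ ⦃x y : V⦄, (G.deleteEdges {s(a, b)}).Adj x y →
        f (Sum.inl x) ≠ f (Sum.inl y) := by
      intro x y hxy
      rw [SimpleGraph.deleteEdges_adj, Set.mem_singleton_iff] at hxy
      refine f.valid ?_
      rw [SimpleGraph.deleteEdges_adj, Set.mem_singleton_iff]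
      refine ⟨hxy.1, fun hm => hxy.2 ?_⟩
      rcases Sym2.eq_iff.mp hm with ⟨h1, h2⟩ | ⟨h1, h2⟩
      · exact Sym2.eq_iff.mpr (Or.inl ⟨Sum.inl.inj h1, Sum.inl.inj h2⟩)
      · exact Sym2.eq_iff.mpr (Or.inr ⟨Sum.inl.inj h1, Sum.inl.inj h2⟩)
    have hS : k ≤ (Finset.univ.image (fun x : V => f (Sum.inl x))).card := by
      have hc := colorable_of_mem (G.deleteEdges {s(a, b)}) hf1
        (fun w => Finset.mem_image_of_mem (fun x : V => f (Sum.inl x)) (Finset.mem_univ w))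
      have hc' := induce_colorable_of_deleteEdge G hc
      have := hc'.chromaticNumber_le
      rw [hv a, Nat.cast_le] at this
      exact this
    have hT : k ≤ (Finset.univ.image (fun x : V => f (Sum.inr x))).card := by
      refine le_card_image hk ?_
      intro x y hxy
      refine f.valid ?_
      rw [SimpleGraph.deleteEdges_adj, Set.mem_singleton_iff]
      exact ⟨hxy, by simp [Sym2.eq_iff]⟩
    refine two_sets_le hS hT ?_
    rw [Finset.disjoint_left]
    rintro c hc hc'
    simp only [Finset.mem_image, Finset.mem_univ, true_and] at hc hc'
    obtain ⟨x, hx⟩ := hc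
    obtain ⟨y, hy⟩ := hc'
    refine f.valid (v := Sum.inl x) (w := Sum.inr y) ?_ (hx.trans hy.symm)
    rw [SimpleGraph.deleteEdges_adj, Set.mem_singleton_iff]
    exact ⟨join_adj_lr, by simp [Sym2.eq_iff]⟩
  · -- cross edge `inl a -- inr b`
    have hS : k ≤ (Finset.univ.image
        (fun x : ({a}ᶜ : Set V) => f (Sum.inl x.1))).card := by
      refine le_card_image (hv a) ?_
      rintro ⟨x, hx⟩ ⟨y, hy⟩ hxy
      have hadj : G.Adj x y := hxy
      refine f.valid ?_
      rw [SimpleGraph.deleteEdges_adj, Set.mem_singleton_iff]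
      exact ⟨hadj, by simp [Sym2.eq_iff]⟩
    have hT : k ≤ (Finset.univ.image (fun x : V => f (Sum.inr x))).card := by
      refine le_card_image hk ?_
      intro x y hxy
      refine f.valid ?_
      rw [SimpleGraph.deleteEdges_adj, Set.mem_singleton_iff]
      exact ⟨hxy, by simp [Sym2.eq_iff]⟩
    refine two_sets_le hS hT ?_
    rw [Finset.disjoint_left]
    rintro c hc hc'
    simp only [Finset.mem_image, Finset.mem_univ, true_and] at hc hc'
    obtain ⟨⟨x, hx⟩, hfx⟩ := hc
    obtain ⟨y, hy⟩ := hc'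
    have hxa : x ≠ a := by simpa using hx
    refine f.valid (v := Sum.inl x) (w := Sum.inr y) ?_ (hfx.trans hy.symm)
    rw [SimpleGraph.deleteEdges_adj, Set.mem_singleton_iff]
    exact ⟨join_adj_lr, by simp [Sym2.eq_iff, hxa]⟩
  · -- cross edge `inr a -- inl b`
    have hS : k ≤ (Finset.univ.image
        (fun x : ({a}ᶜ : Set V) => f (Sum.inr x.1))).card := by
      refine le_card_image (hv a) ?_
      rintro ⟨x, hx⟩ ⟨y, hy⟩ hxy
      have hadj : G.Adj x y := hxy
      refine f.valid ?_
      rw [SimpleGraph.deleteEdges_adj, Set.mem_singleton_iff]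
      exact ⟨hadj, by simp [Sym2.eq_iff]⟩
    have hT : k ≤ (Finset.univ.image (fun x : V => f (Sum.inl x))).card := by
      refine le_card_image hk ?_
      intro x y hxy
      refine f.valid ?_
      rw [SimpleGraph.deleteEdges_adj, Set.mem_singleton_iff]
      exact ⟨hxy, by simp [Sym2.eq_iff]⟩
    refine two_sets_le hS hT ?_
    rw [Finset.disjoint_left]
    rintro c hc hc'
    simp only [Finset.mem_image, Finset.mem_univ, true_and] at hc hc'
    obtain ⟨⟨x, hx⟩, hfx⟩ := hc
    obtain ⟨y, hy⟩ := hc'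
    have hxa : x ≠ a := by simpa using hx
    refine f.valid (v := Sum.inr x) (w := Sum.inl y) ?_ (hfx.trans hy.symm)
    rw [SimpleGraph.deleteEdges_adj, Set.mem_singleton_iff]
    exact ⟨join_adj_rl, by simp [Sym2.eq_iff, hxa]⟩
  · -- edge inside the second copy
    have hab : G.Adj a b := hpq
    have hf1 : ∀ ⦃x y : V⦄, (G.deleteEdges {s(a, b)}).Adj x y →
        f (Sum.inr x) ≠ f (Sum.inr y) := by
      intro x y hxy
      rw [SimpleGraph.deleteEdges_adj, Set.mem_singleton_iff] at hxy
      refine f.valid ?_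
      rw [SimpleGraph.deleteEdges_adj, Set.mem_singleton_iff]
      refine ⟨hxy.1, fun hm => hxy.2 ?_⟩
      rcases Sym2.eq_iff.mp hm with ⟨h1, h2⟩ | ⟨h1, h2⟩
      · exact Sym2.eq_iff.mpr (Or.inl ⟨Sum.inr.inj h1, Sum.inr.inj h2⟩)
      · exact Sym2.eq_iff.mpr (Or.inr ⟨Sum.inr.inj h1, Sum.inr.inj h2⟩)
    have hS : k ≤ (Finset.univ.image (fun x : V => f (Sum.inr x))).card := by
      have hc := colorable_of_mem (G.deleteEdges {s(a, b)}) hf1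
        (fun w => Finset.mem_image_of_mem (fun x : V => f (Sum.inr x)) (Finset.mem_univ w))
      have hc' := induce_colorable_of_deleteEdge G hc
      have := hc'.chromaticNumber_le
      rw [hv a, Nat.cast_le] at this
      exact this
    have hT : k ≤ (Finset.univ.image (fun x : V => f (Sum.inl x))).card := by
      refine le_card_image hk ?_
      intro x y hxy
      refine f.valid ?_
      rw [SimpleGraph.deleteEdges_adj, Set.mem_singleton_iff]
      exact ⟨hxy, by simp [Sym2.eq_iff]⟩
    refine two_sets_le hS hT ?_
    rw [Finset.disjoint_left]
    rintro c hc hc'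
    simp only [Finset.mem_image, Finset.mem_univ, true_and] at hc hc'
    obtain ⟨x, hx⟩ := hc
    obtain ⟨y, hy⟩ := hc'
    refine f.valid (v := Sum.inr x) (w := Sum.inl y) ?_ (hx.trans hy.symm)
    rw [SimpleGraph.deleteEdges_adj, Set.mem_singleton_iff]
    exact ⟨join_adj_rl, by simp [Sym2.eq_iff]⟩

end VJStableAux

open SimpleGraph VJStableAux in
/-- `G` is χ-vertex-stable iff the join `G + G` is χ-(edge-)stable. -/
theorem vertexStable_iff_join_edgeStable {V : Type*} [Fintype V] (G : SimpleGraph V) :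
    (∀ v : V, (G.induce {v}ᶜ).chromaticNumber = G.chromaticNumber) ↔
    (∀ e ∈ (G.joinGraph G).edgeSet,
      ((G.joinGraph G).deleteEdges {e}).chromaticNumber = (G.joinGraph G).chromaticNumber) := by
  classical
  have hGne : G.chromaticNumber ≠ ⊤ :=
    chromaticNumber_ne_top_iff_exists.mpr ⟨_, G.colorable_of_fintype⟩
  set k : ℕ := G.chromaticNumber.toNat with hkdef
  have hk : G.chromaticNumber = (k : ℕ∞) := (ENat.coe_toNat hGne).symm
  have hGk : G.Colorable k := G.colorable_chromaticNumber_of_fintype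
  constructor
  · intro hv e he
    have hv' : ∀ v : V, (G.induce {v}ᶜ).chromaticNumber = (k : ℕ∞) :=
      fun v => (hv v).trans hk
    induction e using Sym2.ind with
    | _ p q =>
      have hpq : (G.joinGraph G).Adj p q := (SimpleGraph.mem_edgeSet _).mp he
      refine le_antisymm
        (SimpleGraph.chromaticNumber_mono (G.joinGraph G) (SimpleGraph.deleteEdges_le _)) ?_
      have hDne : ((G.joinGraph G).deleteEdges {s(p, q)}).chromaticNumber ≠ ⊤ :=
        chromaticNumber_ne_top_iff_exists.mpr ⟨_, SimpleGraph.colorable_of_fintype _⟩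
      set m : ℕ := ((G.joinGraph G).deleteEdges {s(p, q)}).chromaticNumber.toNat with hmdef
      have hm : ((G.joinGraph G).deleteEdges {s(p, q)}).chromaticNumber = (m : ℕ∞) :=
        (ENat.coe_toNat hDne).symm
      have hmc : ((G.joinGraph G).deleteEdges {s(p, q)}).Colorable m :=
        SimpleGraph.colorable_chromaticNumber_of_fintype _
      have hcount : k + k ≤ m := forward_count hk hv' hpq hmc
      calc (G.joinGraph G).chromaticNumber ≤ ((k + k : ℕ) : ℕ∞) :=
            (join_colorable hGk).chromaticNumber_le
        _ ≤ (m : ℕ∞) := by exact_mod_cast hcount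
        _ = _ := hm.symm
  · intro he v
    have hle : (G.induce {v}ᶜ).chromaticNumber ≤ G.chromaticNumber :=
      SimpleGraph.chromaticNumber_mono_of_hom (SimpleGraph.Embedding.induce _).toHom
    have he0 : s(Sum.inl v, Sum.inr v) ∈ (G.joinGraph G).edgeSet :=
      (SimpleGraph.mem_edgeSet _).mpr join_adj_lr
    have hst := he _ he0
    -- χ of the induced subgraph, as a natural number
    have hIne : (G.induce {v}ᶜ).chromaticNumber ≠ ⊤ :=
      chromaticNumber_ne_top_iff_exists.mpr ⟨_, SimpleGraph.colorable_of_fintype _⟩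
    set m : ℕ := (G.induce {v}ᶜ).chromaticNumber.toNat with hmdef
    have hm : (G.induce {v}ᶜ).chromaticNumber = (m : ℕ∞) := (ENat.coe_toNat hIne).symm
    obtain ⟨g⟩ : (G.induce {v}ᶜ).Colorable m :=
      SimpleGraph.colorable_chromaticNumber_of_fintype _
    -- build a coloring of the join minus the cross edge at `v` with `m + m + 1` colors
    let F : V ⊕ V → (Fin m ⊕ Fin m) ⊕ Unit := fun x =>
      match x with
      | Sum.inl x => if h : x = v then Sum.inr () else
          Sum.inl (Sum.inl (g ⟨x, by simpa using h⟩))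
      | Sum.inr x => if h : x = v then Sum.inr () else
          Sum.inl (Sum.inr (g ⟨x, by simpa using h⟩))
    have hF : ∀ ⦃x y : V ⊕ V⦄,
        ((G.joinGraph G).deleteEdges {s(Sum.inl v, Sum.inr v)}).Adj x y → F x ≠ F y := by
      rintro (x | x) (y | y) hxy <;>
        rw [SimpleGraph.deleteEdges_adj, Set.mem_singleton_iff] at hxy
      · have hadj : G.Adj x y := hxy.1
        by_cases hx : x = v <;> by_cases hy : y = v
        · exact absurd hadj (by rw [hx, hy]; exact G.loopless.irrefl v)
        · simp [F, hx, hy]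
        · simp [F, hx, hy]
        · simp only [F, dif_neg hx, dif_neg hy]
          intro hcon
          refine g.valid (show (G.induce {v}ᶜ).Adj ⟨x, by simpa using hx⟩
            ⟨y, by simpa using hy⟩ from hadj) ?_
          simpa using hcon
      · have hne : ¬(x = v ∧ y = v) := by
          intro ⟨hx, hy⟩
          exact hxy.2 (by rw [hx, hy])
        by_cases hx : x = v <;> by_cases hy : y = v
        · exact absurd ⟨hx, hy⟩ hne
        · simp [F, hx, hy]
        · simp [F, hx, hy]
        · simp [F, hx, hy]
      · have hne : ¬(x = v ∧ y = v) := by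
          intro ⟨hx, hy⟩
          exact hxy.2 (by rw [hx, hy, Sym2.eq_swap])
        by_cases hx : x = v <;> by_cases hy : y = v
        · exact absurd ⟨hx, hy⟩ hne
        · simp [F, hx, hy]
        · simp [F, hx, hy]
        · simp [F, hx, hy]
      · have hadj : G.Adj x y := hxy.1
        by_cases hx : x = v <;> by_cases hy : y = v
        · exact absurd hadj (by rw [hx, hy]; exact G.loopless.irrefl v)
        · simp [F, hx, hy]
        · simp [F, hx, hy]
        · simp only [F, dif_neg hx, dif_neg hy]
          intro hcon
          refine g.valid (show (G.induce {v}ᶜ).Adj ⟨x, by simpa using hx⟩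
            ⟨y, by simpa using hy⟩ from hadj) ?_
          simpa using hcon
    have hcolF : ((G.joinGraph G).deleteEdges {s(Sum.inl v, Sum.inr v)}).Colorable
        (m + m + 1) := by
      have C := SimpleGraph.Coloring.mk F (fun {x y} h' => hF h')
      have := C.colorable
      simpa [add_assoc] using this
    -- lower bound on χ(J)
    have hJne : (G.joinGraph G).chromaticNumber ≠ ⊤ :=
      chromaticNumber_ne_top_iff_exists.mpr ⟨_, SimpleGraph.colorable_of_fintype _⟩
    set j : ℕ := (G.joinGraph G).chromaticNumber.toNat with hjdef
    have hj : (G.joinGraph G).chromaticNumber = (j : ℕ∞) := (ENat.coe_toNat hJne).symm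
    have hjlow : k + k ≤ j :=
      join_lower hk (SimpleGraph.colorable_chromaticNumber_of_fintype _)
    have hjup : (j : ℕ∞) ≤ ((m + m + 1 : ℕ) : ℕ∞) := by
      rw [← hj, ← hst]
      exact hcolF.chromaticNumber_le
    have hjup' : j ≤ m + m + 1 := by exact_mod_cast hjup
    have hkm : k ≤ m := by omega
    refine le_antisymm (hle.trans_eq ?_) ?_
    · exact hk ▸ rfl
    · rw [hk, hm]
      exact_mod_cast hkm
end

section
/- The disjoint union G ∪ G is unfrozen for the chromatic number (adding any nonedge leaves χ unchanged) if and only if G is unfrozen for the chromatic number, for every graph G with χ(G) ≥ 2. -/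
namespace SimpleGraph
variable {V : Type*}

lemma aux_sum_colorable_iff {G H : SimpleGraph V} {n : ℕ} :
    (G ⊕g H).Colorable n ↔ G.Colorable n ∧ H.Colorable n := by
  constructor
  · intro ⟨C⟩
    exact ⟨⟨C.comp Embedding.sumInl.toHom⟩, ⟨C.comp Embedding.sumInr.toHom⟩⟩
  · rintro ⟨⟨C⟩, ⟨D⟩⟩
    refine ⟨Coloring.mk (Sum.elim C D) ?_⟩
    rintro (a|a) (b|b) hab <;> simp_all [C.valid, D.valid]

lemma aux_chromaticNumber_ne_top [Fintype V] (G : SimpleGraph V) :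
    G.chromaticNumber ≠ ⊤ :=
  chromaticNumber_ne_top_iff_exists.mpr ⟨_, G.colorable_of_fintype⟩

lemma aux_chromaticNumber_sum [Fintype V] (G H : SimpleGraph V) :
    (G ⊕g H).chromaticNumber = max G.chromaticNumber H.chromaticNumber := by
  have hG := aux_chromaticNumber_ne_top G
  have hH := aux_chromaticNumber_ne_top H
  refine le_antisymm ?_ (max_le (chromaticNumber_mono_of_hom Embedding.sumInl.toHom)
      (chromaticNumber_mono_of_hom Embedding.sumInr.toHom))
  rcases le_total G.chromaticNumber H.chromaticNumber with hle | hle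
  · have hc : (G ⊕g H).Colorable (ENat.toNat H.chromaticNumber) :=
      aux_sum_colorable_iff.mpr
        ⟨chromaticNumber_le_iff_colorable.mp (by rw [ENat.coe_toNat hH]; exact hle),
          H.colorable_chromaticNumber_of_fintype⟩
    calc (G ⊕g H).chromaticNumber ≤ _ := hc.chromaticNumber_le
      _ = H.chromaticNumber := ENat.coe_toNat hH
      _ ≤ _ := le_max_right _ _
  · have hc : (G ⊕g H).Colorable (ENat.toNat G.chromaticNumber) :=
      aux_sum_colorable_iff.mpr
        ⟨G.colorable_chromaticNumber_of_fintype,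
          chromaticNumber_le_iff_colorable.mp (by rw [ENat.coe_toNat hG]; exact hle)⟩
    calc (G ⊕g H).chromaticNumber ≤ _ := hc.chromaticNumber_le
      _ = G.chromaticNumber := ENat.coe_toNat hG
      _ ≤ _ := le_max_left _ _

lemma aux_eq_left (G H : SimpleGraph V) (x y : V) :
    (G ⊕g H) ⊔ fromEdgeSet {s(Sum.inl x, Sum.inl y)}
      = (G ⊔ fromEdgeSet {s(x, y)}) ⊕g H := by
  ext a b
  cases a <;> cases b <;> simp [Sym2.eq_iff, or_and_right]

lemma aux_eq_right (G H : SimpleGraph V) (x y : V) :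
    (G ⊕g H) ⊔ fromEdgeSet {s(Sum.inr x, Sum.inr y)}
      = G ⊕g (H ⊔ fromEdgeSet {s(x, y)}) := by
  ext a b
  cases a <;> cases b <;> simp [Sym2.eq_iff, or_and_right]

lemma aux_cross_edge [Fintype V] (G : SimpleGraph V) (h2 : 2 ≤ G.chromaticNumber) (x y : V) :
    ((G ⊕g G) ⊔ fromEdgeSet {s(Sum.inl x, Sum.inr y)}).chromaticNumber
      = (G ⊕g G).chromaticNumber := by
  have hG := aux_chromaticNumber_ne_top G
  set n := ENat.toNat G.chromaticNumber with hn
  have hcast : (n : ℕ∞) = G.chromaticNumber := ENat.coe_toNat hG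
  have h2n : 2 ≤ n := by
    have := h2
    rw [← hcast] at this
    exact_mod_cast this
  obtain ⟨C⟩ := G.colorable_chromaticNumber_of_fintype
  haveI : Nontrivial (Fin n) := Fin.nontrivial_iff_two_le.mpr h2n
  obtain ⟨c', hc'⟩ := exists_ne (C x)
  set σ : Fin n ≃ Fin n := if C y = C x then Equiv.swap (C x) c' else Equiv.refl _ with hσdef
  have hσ : σ (C y) ≠ C x := by
    by_cases h : C y = C x
    · simp [hσdef, h, Equiv.swap_apply_left, hc']
    · simp [hσdef, h]
  have hcol : ((G ⊕g G) ⊔ fromEdgeSet {s(Sum.inl x, Sum.inr y)}).Colorable n := by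
    refine ⟨Coloring.mk (Sum.elim C (σ ∘ C)) ?_⟩
    rintro (a|a) (b|b) hab <;>
      simp only [sup_adj, sum_adj, fromEdgeSet_adj, Set.mem_singleton_iff, Sym2.eq_iff,
        Sum.inl.injEq, Sum.inr.injEq, reduceCtorEq, false_and, and_false, or_false,
        false_or, or_false, ne_eq, Sum.elim_inl, Sum.elim_inr, Function.comp_apply] at hab ⊢
    · exact C.valid hab
    · obtain ⟨⟨rfl, hb⟩, -⟩ := hab
      rw [hb]
      exact fun h => hσ h.symm
    · obtain ⟨⟨rfl, hb⟩, -⟩ := hab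
      rw [hb]
      exact hσ
    · exact fun h => C.valid hab (σ.injective h)
  refine le_antisymm ?_ (chromaticNumber_mono _ le_sup_left)
  calc _ ≤ (n : ℕ∞) := hcol.chromaticNumber_le
    _ = (G ⊕g G).chromaticNumber := by rw [hcast, aux_chromaticNumber_sum, max_self]

end SimpleGraph

/-- A graph is unfrozen for the chromatic number if adding any nonedge leaves `χ` unchanged. -/
def SimpleGraph.ChiUnfrozen {V : Type*} (G : SimpleGraph V) : Prop :=
  ∀ x y : V, x ≠ y → ¬ G.Adj x y →
    (G ⊔ SimpleGraph.fromEdgeSet {s(x, y)}).chromaticNumber = G.chromaticNumber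

/-- For every graph `G` with `χ(G) ≥ 2`, the disjoint union `G ∪ G` is unfrozen
for the chromatic number iff `G` is. -/
theorem disjUnion_self_unfrozen_iff {V : Type*} [Fintype V] (G : SimpleGraph V)
    (h2 : 2 ≤ G.chromaticNumber) :
    (G ⊕g G).ChiUnfrozen ↔ G.ChiUnfrozen := by
  classical
  have hsum : (G ⊕g G).chromaticNumber = G.chromaticNumber := by
    rw [SimpleGraph.aux_chromaticNumber_sum, max_self]
  constructor
  · intro hU x y hxy hna
    have key := hU (Sum.inl x) (Sum.inl y) (by simpa using hxy)
      (by simpa using hna)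
    rw [SimpleGraph.aux_eq_left, SimpleGraph.aux_chromaticNumber_sum, hsum] at key
    refine le_antisymm ?_ (SimpleGraph.chromaticNumber_mono _ le_sup_left)
    calc (G ⊔ SimpleGraph.fromEdgeSet {s(x, y)}).chromaticNumber
        ≤ max (G ⊔ SimpleGraph.fromEdgeSet {s(x, y)}).chromaticNumber G.chromaticNumber :=
          le_max_left _ _
      _ = G.chromaticNumber := key
  · rintro hU (a|a) (b|b) hab hnadj
    · have h1 : a ≠ b := fun h => hab (by rw [h])
      have h2' : ¬ G.Adj a b := fun h => hnadj (by simpa using h)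
      rw [SimpleGraph.aux_eq_left, SimpleGraph.aux_chromaticNumber_sum, hU a b h1 h2', max_self,
        hsum]
    · exact SimpleGraph.aux_cross_edge G h2 a b
    · rw [show s(Sum.inr a, (Sum.inl b : V ⊕ V)) = s(Sum.inl b, Sum.inr a) from Sym2.eq_swap]
      exact SimpleGraph.aux_cross_edge G h2 b a
    · have h1 : a ≠ b := fun h => hab (by rw [h])
      have h2' : ¬ G.Adj a b := fun h => hnadj (by simpa using h)
      rw [SimpleGraph.aux_eq_right, SimpleGraph.aux_chromaticNumber_sum, hU a b h1 h2', max_self,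
        hsum]
end

section
/- In the β-stabilizing gadget construction: let G' be obtained from G by replacing an edge {v₁,v₂} with a 4-cycle u₁u₂u₃u₄ together with edges {v₁,u₁}, {v₁,u₃}, {v₂,u₂}, {v₂,u₄} (and deleting {v₁,v₂}). Then β(G') = β(G) + 2. -/
/-- The vertex cover number: the smallest size of a set of vertices meeting every edge. -/
noncomputable def SimpleGraph.vertexCoverNumNat {V : Type*} (G : SimpleGraph V) : ℕ :=
  sInf {n | ∃ s : Finset V, (∀ ⦃a b⦄, G.Adj a b → a ∈ s ∨ b ∈ s) ∧ s.card = n}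

/-- The β-stabilizing gadget: replace the edge `{v₁,v₂}` of `G` by a 4-cycle
`u₀u₁u₂u₃` together with the edges `{v₁,u₀}, {v₁,u₂}, {v₂,u₁}, {v₂,u₃}`
(the edge `{v₁,v₂}` itself is deleted). -/
def betaGadget {V : Type*} (G : SimpleGraph V) (v₁ v₂ : V) : SimpleGraph (V ⊕ Fin 4) :=
  SimpleGraph.fromEdgeSet
    ((Sym2.map Sum.inl '' (G.edgeSet \ {s(v₁, v₂)})) ∪
      {s((Sum.inr 0 : V ⊕ Fin 4), Sum.inr 1), s((Sum.inr 1 : V ⊕ Fin 4), Sum.inr 2),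
       s((Sum.inr 2 : V ⊕ Fin 4), Sum.inr 3), s((Sum.inr 3 : V ⊕ Fin 4), Sum.inr 0),
       s((Sum.inl v₁ : V ⊕ Fin 4), Sum.inr 0), s((Sum.inl v₁ : V ⊕ Fin 4), Sum.inr 2),
       s((Sum.inl v₂ : V ⊕ Fin 4), Sum.inr 1), s((Sum.inl v₂ : V ⊕ Fin 4), Sum.inr 3)})

open Sum

section Aux
variable {V : Type*} {G : SimpleGraph V} {v₁ v₂ : V}

lemma betaGadget_adj_inl {a b : V} (hab : G.Adj a b) (hne : s(a,b) ≠ s(v₁,v₂)) :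
    (betaGadget G v₁ v₂).Adj (inl a) (inl b) := by
  rw [betaGadget, SimpleGraph.fromEdgeSet_adj]
  exact ⟨Or.inl ⟨s(a,b), ⟨hab, by simpa using hne⟩, by rw [Sym2.map_pair_eq]⟩,
    by simp [hab.ne]⟩

lemma betaGadget_adj_rr {i j : Fin 4}
    (hmem : s((inr i : V ⊕ Fin 4), inr j) ∈
      ({s((Sum.inr 0 : V ⊕ Fin 4), Sum.inr 1), s((Sum.inr 1 : V ⊕ Fin 4), Sum.inr 2),
       s((Sum.inr 2 : V ⊕ Fin 4), Sum.inr 3), s((Sum.inr 3 : V ⊕ Fin 4), Sum.inr 0),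
       s((Sum.inl v₁ : V ⊕ Fin 4), Sum.inr 0), s((Sum.inl v₁ : V ⊕ Fin 4), Sum.inr 2),
       s((Sum.inl v₂ : V ⊕ Fin 4), Sum.inr 1), s((Sum.inl v₂ : V ⊕ Fin 4), Sum.inr 3)} :
        Set (Sym2 (V ⊕ Fin 4)))) (hne : i ≠ j) :
    (betaGadget G v₁ v₂).Adj (inr i) (inr j) := by
  rw [betaGadget, SimpleGraph.fromEdgeSet_adj]
  exact ⟨Or.inr hmem, fun hc => hne (Sum.inr_injective hc)⟩

lemma betaGadget_adj_lr {v : V} {j : Fin 4}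
    (hmem : s((inl v : V ⊕ Fin 4), inr j) ∈
      ({s((Sum.inr 0 : V ⊕ Fin 4), Sum.inr 1), s((Sum.inr 1 : V ⊕ Fin 4), Sum.inr 2),
       s((Sum.inr 2 : V ⊕ Fin 4), Sum.inr 3), s((Sum.inr 3 : V ⊕ Fin 4), Sum.inr 0),
       s((Sum.inl v₁ : V ⊕ Fin 4), Sum.inr 0), s((Sum.inl v₁ : V ⊕ Fin 4), Sum.inr 2),
       s((Sum.inl v₂ : V ⊕ Fin 4), Sum.inr 1), s((Sum.inl v₂ : V ⊕ Fin 4), Sum.inr 3)} :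
        Set (Sym2 (V ⊕ Fin 4)))) :
    (betaGadget G v₁ v₂).Adj (inl v) (inr j) := by
  rw [betaGadget, SimpleGraph.fromEdgeSet_adj]
  exact ⟨Or.inr hmem, by simp⟩

end Aux

/-- Substituting the β-stabilizing gadget for an edge increases the vertex cover number
by exactly two: `β(G') = β(G) + 2`. -/
theorem vertexCoverNum_betaGadget {V : Type*} [Fintype V] (G : SimpleGraph V)
    (v₁ v₂ : V) (h : G.Adj v₁ v₂) :
    (betaGadget G v₁ v₂).vertexCoverNumNat = G.vertexCoverNumNat + 2 := by
  classical
  set SG := {n | ∃ s : Finset V, (∀ ⦃a b⦄, G.Adj a b → a ∈ s ∨ b ∈ s) ∧ s.card = n} with hSG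
  set SG' := {n | ∃ s : Finset (V ⊕ Fin 4),
    (∀ ⦃a b⦄, (betaGadget G v₁ v₂).Adj a b → a ∈ s ∨ b ∈ s) ∧ s.card = n} with hSG'
  have hne : SG.Nonempty := ⟨Finset.univ.card, Finset.univ,
    fun a b _ => Or.inl (Finset.mem_univ a), rfl⟩
  have hne' : SG'.Nonempty := ⟨Finset.univ.card, Finset.univ,
    fun a b _ => Or.inl (Finset.mem_univ a), rfl⟩
  have hG : G.vertexCoverNumNat ∈ SG := Nat.sInf_mem hne
  have hG' : (betaGadget G v₁ v₂).vertexCoverNumNat ∈ SG' := Nat.sInf_mem hne'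
  obtain ⟨s, hs, hcard⟩ := hG
  obtain ⟨s', hs', hcard'⟩ := hG'
  apply le_antisymm
  · -- upper bound: build a cover of the gadget graph of size β(G) + 2
    rcases hs h with hv1 | hv2
    · -- v₁ ∈ s: use s ∪ {u₁, u₃}
      apply Nat.sInf_le
      refine ⟨s.image inl ∪ {inr 1, inr 3}, ?_, ?_⟩
      · intro a b hab
        rw [betaGadget, SimpleGraph.fromEdgeSet_adj] at hab
        obtain ⟨hmem, hab_ne⟩ := hab
        rcases hmem with ⟨e, ⟨heG, hev⟩, hmap⟩ | hmem
        · induction e using Sym2.ind with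
          | _ x y =>
            rw [Sym2.map_pair_eq, Sym2.eq_iff] at hmap
            have hxy : G.Adj x y := heG
            rcases hs hxy with hx | hx <;>
              rcases hmap with ⟨rfl, rfl⟩ | ⟨rfl, rfl⟩ <;> simp [hx]
        · simp only [Set.mem_insert_iff, Set.mem_singleton_iff] at hmem
          rcases hmem with hm|hm|hm|hm|hm|hm|hm|hm <;>
            rcases Sym2.eq_iff.mp hm with ⟨rfl, rfl⟩ | ⟨rfl, rfl⟩ <;> simp [hv1]
      · rw [Finset.card_union_of_disjoint, Finset.card_image_of_injective _ Sum.inl_injective,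
          hcard]
        · rw [Finset.card_pair (by rintro ⟨⟩)]
        · rw [Finset.disjoint_left]
          rintro x hx hx'
          simp only [Finset.mem_image] at hx
          obtain ⟨y, -, rfl⟩ := hx
          simp at hx'
    · -- v₂ ∈ s: use s ∪ {u₀, u₂}
      apply Nat.sInf_le
      refine ⟨s.image inl ∪ {inr 0, inr 2}, ?_, ?_⟩
      · intro a b hab
        rw [betaGadget, SimpleGraph.fromEdgeSet_adj] at hab
        obtain ⟨hmem, hab_ne⟩ := hab
        rcases hmem with ⟨e, ⟨heG, hev⟩, hmap⟩ | hmem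
        · induction e using Sym2.ind with
          | _ x y =>
            rw [Sym2.map_pair_eq, Sym2.eq_iff] at hmap
            have hxy : G.Adj x y := heG
            rcases hs hxy with hx | hx <;>
              rcases hmap with ⟨rfl, rfl⟩ | ⟨rfl, rfl⟩ <;> simp [hx]
        · simp only [Set.mem_insert_iff, Set.mem_singleton_iff] at hmem
          rcases hmem with hm|hm|hm|hm|hm|hm|hm|hm <;>
            rcases Sym2.eq_iff.mp hm with ⟨rfl, rfl⟩ | ⟨rfl, rfl⟩ <;> simp [hv2]
      · rw [Finset.card_union_of_disjoint, Finset.card_image_of_injective _ Sum.inl_injective,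
          hcard]
        · rw [Finset.card_pair (by rintro ⟨⟩)]
        · rw [Finset.disjoint_left]
          rintro x hx hx'
          simp only [Finset.mem_image] at hx
          obtain ⟨y, -, rfl⟩ := hx
          simp at hx'
  · -- lower bound
    have hmem01 : ∀ (i j : Fin 4), s((inr i : V ⊕ Fin 4), inr j) ∈
      ({s((Sum.inr 0 : V ⊕ Fin 4), Sum.inr 1), s((Sum.inr 1 : V ⊕ Fin 4), Sum.inr 2),
       s((Sum.inr 2 : V ⊕ Fin 4), Sum.inr 3), s((Sum.inr 3 : V ⊕ Fin 4), Sum.inr 0),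
       s((Sum.inl v₁ : V ⊕ Fin 4), Sum.inr 0), s((Sum.inl v₁ : V ⊕ Fin 4), Sum.inr 2),
       s((Sum.inl v₂ : V ⊕ Fin 4), Sum.inr 1), s((Sum.inl v₂ : V ⊕ Fin 4), Sum.inr 3)} :
        Set (Sym2 (V ⊕ Fin 4))) → True := fun _ _ _ => trivial
    have h01 := hs' (betaGadget_adj_rr (v₁ := v₁) (v₂ := v₂) (i := 0) (j := 1)
      (by left; rfl) (by decide))
    have h23 := hs' (betaGadget_adj_rr (v₁ := v₁) (v₂ := v₂) (i := 2) (j := 3)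
      (by right; right; left; rfl) (by decide))
    have hv10 := hs' (betaGadget_adj_lr (v := v₁) (j := 0)
      (by right; right; right; right; left; rfl))
    have hv12 := hs' (betaGadget_adj_lr (v := v₁) (j := 2)
      (by right; right; right; right; right; left; rfl))
    have hv21 := hs' (betaGadget_adj_lr (v := v₂) (j := 1)
      (by right; right; right; right; right; right; left; rfl))
    have hv23 := hs' (betaGadget_adj_lr (v := v₂) (j := 3)
      (by right; right; right; right; right; right; right; rfl))
    by_cases hv : (inl v₁ : V ⊕ Fin 4) ∈ s' ∨ (inl v₂ : V ⊕ Fin 4) ∈ s'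
    · -- toLeft s' is a cover of G
      have hcover : ∀ ⦃a b⦄, G.Adj a b → a ∈ s'.toLeft ∨ b ∈ s'.toLeft := by
        intro a b hab
        by_cases he : s(a, b) = s(v₁, v₂)
        · rcases Sym2.eq_iff.mp he with ⟨rfl, rfl⟩ | ⟨rfl, rfl⟩ <;>
            rcases hv with hv | hv <;> simp [Finset.mem_toLeft, hv]
        · rcases hs' (betaGadget_adj_inl hab he) with hx | hx <;>
            simp [Finset.mem_toLeft, hx]
      have h1 : G.vertexCoverNumNat ≤ s'.toLeft.card := Nat.sInf_le ⟨_, hcover, rfl⟩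
      have h2 : 2 ≤ s'.toRight.card := by
        have ha : (0 : Fin 4) ∈ s'.toRight ∨ (1 : Fin 4) ∈ s'.toRight := by
          rcases h01 with hx | hx <;> [left; right] <;> exact Finset.mem_toRight.mpr hx
        have hb : (2 : Fin 4) ∈ s'.toRight ∨ (3 : Fin 4) ∈ s'.toRight := by
          rcases h23 with hx | hx <;> [left; right] <;> exact Finset.mem_toRight.mpr hx
        rcases ha with ha | ha <;> rcases hb with hb | hb <;>
          exact Finset.one_lt_card.mpr ⟨_, ha, _, hb, by decide⟩
      calc G.vertexCoverNumNat + 2 ≤ s'.toLeft.card + s'.toRight.card := by omega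
        _ = s'.card := Finset.card_toLeft_add_card_toRight
        _ = _ := hcard'
    · push_neg at hv
      obtain ⟨hv1, hv2⟩ := hv
      have hr0 : (0 : Fin 4) ∈ s'.toRight :=
        Finset.mem_toRight.mpr (hv10.resolve_left hv1)
      have hr1 : (1 : Fin 4) ∈ s'.toRight :=
        Finset.mem_toRight.mpr (hv21.resolve_left hv2)
      have hr2 : (2 : Fin 4) ∈ s'.toRight :=
        Finset.mem_toRight.mpr (hv12.resolve_left hv1)
      have hr3 : (3 : Fin 4) ∈ s'.toRight :=
        Finset.mem_toRight.mpr (hv23.resolve_left hv2)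
      have h4 : 4 ≤ s'.toRight.card := by
        have : s'.toRight = Finset.univ := by
          apply Finset.eq_univ_iff_forall.mpr
          intro i
          fin_cases i <;> assumption
        rw [this]
        simp
      have hcover : ∀ ⦃a b⦄, G.Adj a b → a ∈ insert v₁ s'.toLeft ∨ b ∈ insert v₁ s'.toLeft := by
        intro a b hab
        by_cases he : s(a, b) = s(v₁, v₂)
        · rcases Sym2.eq_iff.mp he with ⟨rfl, rfl⟩ | ⟨rfl, rfl⟩ <;> simp
        · rcases hs' (betaGadget_adj_inl hab he) with hx | hx <;>
            simp [Finset.mem_toLeft, hx]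
      have h1 : G.vertexCoverNumNat ≤ (insert v₁ s'.toLeft).card := Nat.sInf_le ⟨_, hcover, rfl⟩
      have h3 : (insert v₁ s'.toLeft).card ≤ s'.toLeft.card + 1 := Finset.card_insert_le _ _
      have := Finset.card_toLeft_add_card_toRight (u := s')
      omega
end
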